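/- Asymptotic representation of the Z-estimator with bundled parameters (Lemma 2.2). Assume θ̂_n is a consistent estimator of θ0 (θ̂_n → θ0 in probability) with Ψ_n(θ̂_n, η̂_n(θ̂_n)) = o_p(n^{-1/2}), θ0 is the unique zero of θ ↦ Ψ(θ, η0(θ)) on Θ, ‖η̂_n − η0‖ = O_p(n^{-β}) for some β ∈ (0, 1/2], and conditions (i)–(iv) hold: (i) stochastic equicontinuity: |√n(Ψ_n − Ψ)(θ̂_n, η̂_n(θ̂_n)) − √n(Ψ_n − Ψ)(θ0, η0(θ0))| / (1 + √n|Ψ_n(θ̂_n, η̂_n(θ̂_n))| + √n|Ψ(θ̂_n, η̂_n(θ̂_n))|) = o_p(1); (ii) √n Ψ_n(θ0, η0(θ0)) = O_p(1); (iii) smoothness: there exist a d×d matrix Ψ̇_1 and a continuous linear map Ψ̇_2 : E → ℝ^d such that, for (θ, η) ∈ Θ0 × H0 as θ → θ0 and ‖η − η0‖ → 0, |Ψ(θ, η(θ)) − Ψ(θ0, η0(θ0)) − (Ψ̇_1 + Ψ̇_2 ∘ η̇_0(θ0))(θ − θ0) − Ψ̇_2[(η − η0)(θ0)]| = o(|θ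 − θ0|) + o(‖η − η0‖) if β = 1/2, or = o(|θ − θ0|) + O(‖η − η0‖^α) for some α > 1 with αβ > 1/2 if 0 < β < 1/2, and the matrix A = −Ψ̇_1 − Ψ̇_2 ∘ η̇_0(θ0) is nonsingular; (iv) √n Ψ̇_2[(η̂_n − η0)(θ0)] = O_p(1). Then √n(θ̂_n − θ0) = A^{-1} √n { (Ψ_n − Ψ)(θ0, η0(θ0)) + Ψ̇_2[(η̂_n − η0)(θ0)] } + o_p(1). -/

import Mathlib

open MeasureTheory Filter Topology ProbabilityTheory
open scoped ENNReal NNReal InnerProductSpace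

noncomputable section

abbrev Euc (d : ℕ) := EuclideanSpace ℝ (Fin d)

/-- `ξ n / a n → 0` in probability, i.e. `ξ n = o_p(a n)`. -/
def oP {Ω : Type*} [MeasurableSpace Ω] (P : Measure Ω) (ξ : ℕ → Ω → ℝ) (a : ℕ → ℝ) : Prop :=
  ∀ ε : ℝ, 0 < ε → Filter.Tendsto (fun n => P {ω | ε * a n ≤ ξ n ω}) Filter.atTop (nhds 0)

/-- `ξ n = O_p(a n)`: for every `ε > 0` there is `M` with
`P(ξ n > M * a n) ≤ ε` for all sufficiently large `n`. -/
def OP {Ω : Type*} [MeasurableSpace Ω] (P : Measure Ω) (ξ : ℕ → Ω → ℝ) (a : ℕ → ℝ) : Prop :=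
  ∀ ε : ℝ, 0 < ε → ∃ M : ℝ, ∀ᶠ n in Filter.atTop, P {ω | M * a n < ξ n ω} ≤ ENNReal.ofReal ε

open Classical in
/-- real-valued indicator of a proposition. -/
def ind (p : Prop) : ℝ := if p then 1 else 0

/-!
Write `u = θ̂ - θ₀`. Stochastic equicontinuity, together with `√n Ψ_n(θ̂, η̂(θ̂)) = o_p(1)` and
`√n Ψ_n(θ₀, η₀(θ₀)) = O_p(1)`, gives `√n Ψ(θ̂, η̂(θ̂)) = O_p(1)` once the error term
`o_p(√n |Ψ(θ̂, η̂(θ̂))|)` is absorbed into the left-hand side. Smoothness, evaluated along the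
consistent `θ̂` and the `n^{-β}`-consistent `η̂`, gives
`√n (Ψ(θ̂, η̂(θ̂)) + A u - Ψ̇₂[(η̂ - η₀)(θ₀)]) = o_p(1 + √n |u|)`: the nuisance error is
`o(‖η̂ - η₀‖) = o_p(n^{-1/2})` when `β = 1/2`, and `O(‖η̂ - η₀‖^α) = O_p(n^{-αβ}) = o_p(n^{-1/2})`
when `β < 1/2`. Inverting `A` bounds `√n |u|` by `O_p(1) + o_p(1) √n |u|`, so `√n u = O_p(1)` by
the same absorption, after which every error term is `o_p(1)`.
-/

section StochasticOrder

variable {Ω : Type*} [MeasurableSpace Ω] {P : Measure Ω}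

theorem oP_one_iff {ξ : ℕ → Ω → ℝ} :
    oP P ξ (fun _ => 1) ↔
      ∀ ε > 0, ∀ δ > 0, ∀ᶠ n in atTop, P {ω | ε ≤ ξ n ω} ≤ ENNReal.ofReal δ := by
  simp only [oP, mul_one, ENNReal.tendsto_nhds_zero]
  refine forall₂_congr fun ε _ => ⟨fun h δ hδ => h _ (ENNReal.ofReal_pos.2 hδ), fun h η hη => ?_⟩
  obtain ⟨δ, -, hδ, hδη⟩ := ENNReal.lt_iff_exists_real_btwn.1 hη
  exact (h δ (ENNReal.ofReal_pos.1 hδ)).mono fun n hn => hn.trans hδη.le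

theorem eventually_measure_le_of_subset_union {S A B : ℕ → Set Ω} {δ : ℝ} (hδ : 0 ≤ δ)
    (hS : ∀ᶠ n in atTop, S n ⊆ A n ∪ B n)
    (hA : ∀ᶠ n in atTop, P (A n) ≤ ENNReal.ofReal (δ / 2))
    (hB : ∀ᶠ n in atTop, P (B n) ≤ ENNReal.ofReal (δ / 2)) :
    ∀ᶠ n in atTop, P (S n) ≤ ENNReal.ofReal δ := by
  filter_upwards [hS, hA, hB] with n hSn hAn hBn
  calc P (S n) ≤ P (A n) + P (B n) := (measure_mono hSn).trans (measure_union_le _ _)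
    _ ≤ ENNReal.ofReal (δ / 2) + ENNReal.ofReal (δ / 2) := add_le_add hAn hBn
    _ = ENNReal.ofReal δ := by rw [← ENNReal.ofReal_add (by positivity) (by positivity), add_halves]

theorem OP.exists_pos {ξ : ℕ → Ω → ℝ} {a : ℕ → ℝ} (h : OP P ξ a) (ha : ∀ n, 0 ≤ a n) {δ : ℝ}
    (hδ : 0 < δ) : ∃ M > 0, ∀ᶠ n in atTop, P {ω | M * a n < ξ n ω} ≤ ENNReal.ofReal δ := by
  obtain ⟨M, hM⟩ := h δ hδ
  refine ⟨max M 1, by positivity, hM.mono fun n hn => (measure_mono fun ω hω => ?_).trans hn⟩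
  exact (mul_le_mul_of_nonneg_right (le_max_left _ _) (ha n)).trans_lt hω

theorem OP.mul_left {ξ : ℕ → Ω → ℝ} {a c : ℕ → ℝ} (h : OP P ξ a) (hc : ∀ n, 0 ≤ c n) :
    OP P (fun n ω => c n * ξ n ω) (fun n => c n * a n) := by
  intro δ hδ
  obtain ⟨M, hM⟩ := h δ hδ
  refine ⟨M, hM.mono fun n hn => (measure_mono fun ω hω => ?_).trans hn⟩
  by_contra hle
  have hle : ξ n ω ≤ M * a n := not_lt.1 hle
  have hω : M * (c n * a n) < c n * ξ n ω := hω
  nlinarith [mul_le_mul_of_nonneg_left hle (hc n)]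

theorem OP.congr_rate {ξ : ℕ → Ω → ℝ} {a b : ℕ → ℝ} (h : OP P ξ a) (hab : a =ᶠ[atTop] b) :
    OP P ξ b := by
  intro δ hδ
  obtain ⟨M, hM⟩ := h δ hδ
  exact ⟨M, (hM.and hab).mono fun n ⟨hn, he⟩ => he ▸ hn⟩

theorem OP.const_mul {ξ : ℕ → Ω → ℝ} (h : OP P ξ (fun _ => 1)) {c : ℝ} (hc : 0 ≤ c) :
    OP P (fun n ω => c * ξ n ω) (fun _ => 1) := by
  intro δ hδ
  obtain ⟨M, hM⟩ := h.mul_left (fun _ => hc) δ hδ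
  exact ⟨M * c, by simpa only [mul_one] using hM⟩

theorem OP_const (c : ℝ) : OP P (fun _ _ => c) (fun _ => 1) :=
  fun _ _ => ⟨c, .of_forall fun _ => by simp⟩

theorem oP_const_zero : oP P (fun _ _ => 0) (fun _ => 1) :=
  oP_one_iff.2 fun ε hε _ _ => .of_forall fun _ => by simp [not_le.2 hε]

theorem OP_of_oP {ξ : ℕ → Ω → ℝ} (h : oP P ξ (fun _ => 1)) : OP P ξ (fun _ => 1) := by
  intro δ hδ
  refine ⟨1, (oP_one_iff.1 h 1 one_pos δ hδ).mono fun n hn =>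
    (measure_mono fun ω hω => ?_).trans hn⟩
  exact le_of_lt (by simpa using hω)

theorem oP_of_le_add {ξ ζ χ : ℕ → Ω → ℝ} (hξ : oP P ξ (fun _ => 1)) (hζ : oP P ζ (fun _ => 1))
    (h : ∀ n ω, χ n ω ≤ ξ n ω + ζ n ω) : oP P χ (fun _ => 1) := by
  rw [oP_one_iff] at *
  intro ε hε δ hδ
  refine eventually_measure_le_of_subset_union hδ.le (.of_forall fun n ω hω => ?_)
    (hξ (ε / 2) (by positivity) _ (by positivity)) (hζ (ε / 2) (by positivity) _ (by positivity))
  by_contra hc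
  simp only [Set.mem_union, Set.mem_ofPred_eq, not_or, not_le] at hc hω
  linarith [h n ω]

theorem OP_of_le_add {ξ ζ χ : ℕ → Ω → ℝ} (hξ : OP P ξ (fun _ => 1)) (hζ : OP P ζ (fun _ => 1))
    (h : ∀ n ω, χ n ω ≤ ξ n ω + ζ n ω) : OP P χ (fun _ => 1) := by
  intro δ hδ
  obtain ⟨M, hM⟩ := hξ (δ / 2) (by positivity)
  obtain ⟨K, hK⟩ := hζ (δ / 2) (by positivity)
  refine ⟨M + K, eventually_measure_le_of_subset_union hδ.le (.of_forall fun n ω hω => ?_) hM hK⟩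
  by_contra hc
  simp only [Set.mem_union, Set.mem_ofPred_eq, not_or, not_lt, mul_one] at hc hω
  linarith [h n ω]

theorem oP_of_le_mul {ρ Y χ : ℕ → Ω → ℝ} (hρ : oP P ρ (fun _ => 1)) (hY : OP P Y (fun _ => 1))
    (hρ0 : ∀ n ω, 0 ≤ ρ n ω) (h : ∀ n ω, χ n ω ≤ ρ n ω * Y n ω) : oP P χ (fun _ => 1) := by
  rw [oP_one_iff] at *
  intro ε hε δ hδ
  obtain ⟨M, hM0, hM⟩ := hY.exists_pos (fun _ => zero_le_one) (half_pos hδ)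
  refine eventually_measure_le_of_subset_union hδ.le (.of_forall fun n ω hω => ?_) hM
    (hρ (ε / M) (by positivity) _ (by positivity))
  by_contra hc
  simp only [Set.mem_union, Set.mem_ofPred_eq, not_or, not_lt, not_le, mul_one] at hc hω
  have hρM : ρ n ω * M < ε := (lt_div_iff₀ hM0).1 hc.2
  nlinarith [h n ω, mul_le_mul_of_nonneg_left hc.1 (hρ0 n ω)]

theorem OP_of_le_add_mul_self {C ρ Y : ℕ → Ω → ℝ} (hC : OP P C (fun _ => 1))
    (hρ : oP P ρ (fun _ => 1)) (hY0 : ∀ n ω, 0 ≤ Y n ω)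
    (h : ∀ n ω, Y n ω ≤ C n ω + ρ n ω * Y n ω) : OP P Y (fun _ => 1) := by
  intro δ hδ
  obtain ⟨M, -, hM⟩ := hC.exists_pos (fun _ => zero_le_one) (half_pos hδ)
  refine ⟨2 * M, eventually_measure_le_of_subset_union hδ.le (.of_forall fun n ω hω => ?_) hM
    (oP_one_iff.1 hρ (1 / 2) (by norm_num) _ (by positivity))⟩
  by_contra hc
  simp only [Set.mem_union, Set.mem_ofPred_eq, not_or, not_lt, not_le, mul_one] at hc hω
  nlinarith [h n ω, hY0 n ω]

theorem oP_mul_rpow_of_OP {S : ℕ → Ω → ℝ} {a c : ℕ → ℝ} {α : ℝ} (h : OP P S a)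
    (ha : ∀ n, 0 ≤ a n) (hS : ∀ n ω, 0 ≤ S n ω) (hα : 0 ≤ α) (hc : ∀ n, 0 ≤ c n)
    (hca : Tendsto (fun n => c n * a n ^ α) atTop (𝓝 0)) :
    oP P (fun n ω => c n * S n ω ^ α) (fun _ => 1) := by
  rw [oP_one_iff]
  intro ε hε δ hδ
  obtain ⟨M, hM0, hM⟩ := h.exists_pos ha hδ
  have hsmall : ∀ᶠ n in atTop, c n * (M * a n) ^ α < ε := by
    have := (hca.const_mul (M ^ α)).eventually_lt_const (by simpa using hε)
    filter_upwards [this] with n hn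
    rw [Real.mul_rpow hM0.le (ha n)]
    linarith
  filter_upwards [hM, hsmall] with n hn hsn
  refine (measure_mono fun ω hω => ?_).trans hn
  by_contra hc'
  have hle : S n ω ^ α ≤ (M * a n) ^ α := Real.rpow_le_rpow (hS n ω) (not_lt.1 hc') hα
  have hω : ε ≤ c n * S n ω ^ α := hω
  nlinarith [mul_le_mul_of_nonneg_left hle (hc n)]

theorem oP_of_OP_of_tendsto_zero {S : ℕ → Ω → ℝ} {a : ℕ → ℝ} (h : OP P S a) (ha : ∀ n, 0 ≤ a n)
    (hS : ∀ n ω, 0 ≤ S n ω) (ha0 : Tendsto a atTop (𝓝 0)) : oP P S (fun _ => 1) := by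
  simpa using oP_mul_rpow_of_OP h ha hS zero_le_one (fun _ => zero_le_one) (by simpa using ha0)

theorem oP_of_forall_le_mul_add {X Y W ρ : ℕ → Ω → ℝ} (hX : oP P X (fun _ => 1))
    (hY : OP P Y (fun _ => 1)) (hW : oP P W (fun _ => 1))
    (h : ∀ ε > 0, ∃ δ > 0, ∀ n ω, X n ω < δ → ρ n ω ≤ ε * Y n ω + W n ω) :
    oP P ρ (fun _ => 1) := by
  rw [oP_one_iff] at *
  intro ε hε η hη
  obtain ⟨M, hM0, hM⟩ := hY.exists_pos (fun _ => zero_le_one) (half_pos (half_pos hη))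
  obtain ⟨δ, hδ, hρ⟩ := h (ε / (2 * M)) (by positivity)
  refine eventually_measure_le_of_subset_union hη.le (.of_forall fun n ω hω => ?_)
    (hX δ hδ _ (by positivity)) (eventually_measure_le_of_subset_union (by positivity)
      (.of_forall fun n => subset_rfl) hM (hW (ε / 2) (by positivity) _ (by positivity)))
  by_contra hc
  simp only [Set.mem_union, Set.mem_ofPred_eq, not_or, not_lt, not_le, mul_one] at hc hω
  have hεM : ε / (2 * M) * M = ε / 2 := by field_simp
  nlinarith [hρ n ω hc.1, mul_le_mul_of_nonneg_left hc.2.1 (by positivity : 0 ≤ ε / (2 * M))]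

end StochasticOrder

theorem div_one_add_le_of_le {r x v w ε : ℝ} (hx : 0 ≤ x) (hv : 0 ≤ v) (hw : 0 ≤ w) (hε : 0 ≤ ε)
    (h : r ≤ ε * (x + v) + w) : r / (1 + x) ≤ ε * (1 + v) + w := by
  rw [div_le_iff₀ (by positivity)]
  nlinarith [mul_nonneg hε (mul_nonneg hv hx), mul_nonneg hw hx]

theorem forall_exists_le_comp_of_mem_nhdsWithin {T H : Type*} [SeminormedAddCommGroup T]
    {Θ Θ0 : Set T} {θ0 : T} {H0 : Set H} (hΘ0 : Θ0 ∈ 𝓝[Θ] θ0) {D : H → ℝ} {r : T → H → ℝ}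
    {g : ℝ → ℝ → ℝ}
    (h : ∀ ε > 0, ∃ δ > 0, ∀ θ ∈ Θ0, ∀ η ∈ H0, ‖θ - θ0‖ < δ → D η < δ →
      r θ η ≤ ε * ‖θ - θ0‖ + g ε (D η))
    {ι κ : Type*} {θhat : ι → κ → T} {ηhat : ι → κ → H} (hθ : ∀ i j, θhat i j ∈ Θ)
    (hη : ∀ i j, ηhat i j ∈ H0) :
    ∀ ε > 0, ∃ δ > 0, ∀ i j, ‖θhat i j - θ0‖ < δ → D (ηhat i j) < δ →
      r (θhat i j) (ηhat i j) ≤ ε * ‖θhat i j - θ0‖ + g ε (D (ηhat i j)) := by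
  obtain ⟨δ0, hδ0, hball⟩ := Metric.mem_nhdsWithin_iff.1 hΘ0
  intro ε hε
  obtain ⟨δ, hδ, hr⟩ := h ε hε
  refine ⟨min δ δ0, lt_min hδ hδ0, fun i j hθδ hηδ => hr _ ?_ _ (hη i j)
    (hθδ.trans_le (min_le_left _ _)) (hηδ.trans_le (min_le_left _ _))⟩
  exact hball ⟨by simpa [dist_eq_norm] using hθδ.trans_le (min_le_right _ _), hθ i j⟩

section Remainder

variable {Ω : Type*} [MeasurableSpace Ω] {P : Measure Ω} {X S R : ℕ → Ω → ℝ}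

theorem oP_sqrt_mul_div_of_le_mul_add_mul (hX : oP P X (fun _ => 1)) (hX0 : ∀ n ω, 0 ≤ X n ω)
    (hS : OP P S (fun n => (n : ℝ) ^ (-(1 / 2 : ℝ)))) (hS0 : ∀ n ω, 0 ≤ S n ω)
    (hR : ∀ ε > 0, ∃ δ > 0, ∀ n ω, X n ω < δ → S n ω < δ → R n ω ≤ ε * X n ω + ε * S n ω) :
    oP P (fun n ω => √n * R n ω / (1 + √n * X n ω)) (fun _ => 1) := by
  have hSn : OP P (fun n ω => √n * S n ω) (fun _ => 1) := by
    refine (hS.mul_left fun n => Real.sqrt_nonneg n).congr_rate ?_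
    filter_upwards [eventually_gt_atTop 0] with n hn
    rw [Real.sqrt_eq_rpow, ← Real.rpow_add (by exact_mod_cast hn)]
    norm_num
  have hSo : oP P S (fun _ => 1) := oP_of_OP_of_tendsto_zero hS (fun n => by positivity) hS0
    ((tendsto_rpow_neg_atTop (by norm_num)).comp tendsto_natCast_atTop_atTop)
  refine oP_of_forall_le_mul_add (oP_of_le_add hX hSo fun _ _ => le_rfl)
    (OP_of_le_add (OP_const 1) hSn fun _ _ => le_rfl) oP_const_zero fun ε hε => ?_
  obtain ⟨δ, hδ, hRδ⟩ := hR ε hε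
  refine ⟨δ, hδ, fun n ω hXSδ => div_one_add_le_of_le
    (mul_nonneg (Real.sqrt_nonneg n) (hX0 n ω)) (mul_nonneg (Real.sqrt_nonneg n) (hS0 n ω)) le_rfl
    hε.le ?_⟩
  have hXS := hRδ n ω (by linarith [hS0 n ω]) (by linarith [hX0 n ω])
  nlinarith [Real.sqrt_nonneg n]

theorem oP_sqrt_mul_div_of_le_mul_add_rpow {β α Cs : ℝ} (hβ : 0 < β) (hα : 0 ≤ α)
    (hαβ : 1 / 2 < α * β) (hX : oP P X (fun _ => 1)) (hX0 : ∀ n ω, 0 ≤ X n ω)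
    (hS : OP P S (fun n => (n : ℝ) ^ (-β))) (hS0 : ∀ n ω, 0 ≤ S n ω)
    (hR : ∀ ε > 0, ∃ δ > 0, ∀ n ω, X n ω < δ → S n ω < δ → R n ω ≤ ε * X n ω + Cs * S n ω ^ α) :
    oP P (fun n ω => √n * R n ω / (1 + √n * X n ω)) (fun _ => 1) := by
  have hW : oP P (fun n ω => √n * |Cs| * S n ω ^ α) (fun _ => 1) := by
    refine oP_mul_rpow_of_OP hS (fun n => by positivity) hS0 hα (fun n => by positivity) ?_
    have hlim := ((tendsto_rpow_neg_atTop (by linarith : 0 < α * β - 1 / 2)).comp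
      tendsto_natCast_atTop_atTop).const_mul |Cs|
    rw [mul_zero] at hlim
    refine hlim.congr' ?_
    filter_upwards [eventually_gt_atTop 0] with n hn
    have hn : (0 : ℝ) < n := by exact_mod_cast hn
    simp only [Function.comp_apply]
    rw [Real.sqrt_eq_rpow, ← Real.rpow_mul hn.le, mul_comm (_ ^ _) |Cs|, mul_assoc,
      ← Real.rpow_add hn]
    ring_nf
  have hSo : oP P S (fun _ => 1) := oP_of_OP_of_tendsto_zero hS (fun n => by positivity) hS0
    ((tendsto_rpow_neg_atTop hβ).comp tendsto_natCast_atTop_atTop)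
  refine oP_of_forall_le_mul_add (oP_of_le_add hX hSo fun _ _ => le_rfl) (OP_const 1) hW
    fun ε hε => ?_
  obtain ⟨δ, hδ, hRδ⟩ := hR ε hε
  refine ⟨δ, hδ, fun n ω hXSδ => ?_⟩
  have hXS := hRδ n ω (by linarith [hS0 n ω]) (by linarith [hX0 n ω])
  have hCs : Cs * S n ω ^ α ≤ |Cs| * S n ω ^ α :=
    mul_le_mul_of_nonneg_right (le_abs_self Cs) (Real.rpow_nonneg (hS0 n ω) α)
  simpa using div_one_add_le_of_le (mul_nonneg (Real.sqrt_nonneg n) (hX0 n ω)) le_rfl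
    (by have := Real.rpow_nonneg (hS0 n ω) α; positivity) hε.le
    (by nlinarith [Real.sqrt_nonneg n] : √n * R n ω ≤ ε * (√n * X n ω + 0) + √n * |Cs| * S n ω ^ α)

end Remainder

section Linearization

variable {Ω : Type*} [MeasurableSpace Ω] {P : Measure Ω} {F : Type*} [NormedAddCommGroup F]
  [NormedSpace ℝ F] {s : ℕ → ℝ} {ψn ψ ψn₀ l u : ℕ → Ω → F}

theorem OP_mul_norm_of_equicontinuous (hs : ∀ n, 0 ≤ s n)
    (hroot : oP P (fun n ω => s n * ‖ψn n ω‖) (fun _ => 1))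
    (hse : oP P (fun n ω => ‖s n • (ψn n ω - ψ n ω) - s n • ψn₀ n ω‖ /
      (1 + s n * ‖ψn n ω‖ + s n * ‖ψ n ω‖)) (fun _ => 1))
    (htight : OP P (fun n ω => s n * ‖ψn₀ n ω‖) (fun _ => 1)) :
    OP P (fun n ω => s n * ‖ψ n ω‖) (fun _ => 1) := by
  set r := fun n ω => ‖s n • (ψn n ω - ψ n ω) - s n • ψn₀ n ω‖ /
    (1 + s n * ‖ψn n ω‖ + s n * ‖ψ n ω‖)
  have hroot' := OP_of_oP hroot
  have hC : OP P (fun n ω => s n * ‖ψn n ω‖ + s n * ‖ψn₀ n ω‖ + r n ω * (1 + s n * ‖ψn n ω‖))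
      (fun _ => 1) :=
    OP_of_le_add (OP_of_le_add hroot' htight fun _ _ => le_rfl)
      (OP_of_oP (oP_of_le_mul hse (OP_of_le_add (OP_const 1) hroot' fun _ _ => le_rfl)
        (fun n _ => by have := hs n; positivity) fun _ _ => le_rfl)) fun _ _ => le_rfl
  refine OP_of_le_add_mul_self hC hse (fun n _ => by have := hs n; positivity) fun n ω => ?_
  have hden : 0 < 1 + s n * ‖ψn n ω‖ + s n * ‖ψ n ω‖ := by have := hs n; positivity
  have hid : s n • ψ n ω =
      s n • ψn n ω - (s n • (ψn n ω - ψ n ω) - s n • ψn₀ n ω) - s n • ψn₀ n ω := by module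
  have htri : s n * ‖ψ n ω‖ ≤ s n * ‖ψn n ω‖ + ‖s n • (ψn n ω - ψ n ω) - s n • ψn₀ n ω‖ +
      s n * ‖ψn₀ n ω‖ := by
    rw [← norm_smul_of_nonneg (hs n), hid, ← norm_smul_of_nonneg (hs n),
      ← norm_smul_of_nonneg (hs n)]
    exact (norm_sub_le _ _).trans (add_le_add_left (norm_sub_le _ _) _)
  rw [← div_mul_cancel₀ ‖s n • (ψn n ω - ψ n ω) - s n • ψn₀ n ω‖ hden.ne'] at htri
  linarith

theorem OP_mul_norm_of_linearization (A : F ≃L[ℝ] F) (hs : ∀ n, 0 ≤ s n)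
    (hψ : OP P (fun n ω => s n * ‖ψ n ω‖) (fun _ => 1))
    (hl : OP P (fun n ω => s n * ‖l n ω‖) (fun _ => 1))
    (hlin : oP P (fun n ω => s n * ‖ψ n ω + A (u n ω) - l n ω‖ / (1 + s n * ‖u n ω‖))
      (fun _ => 1)) :
    OP P (fun n ω => s n * ‖u n ω‖) (fun _ => 1) := by
  set N := ‖(A.symm : F →L[ℝ] F)‖
  set ρ := fun n ω => s n * ‖ψ n ω + A (u n ω) - l n ω‖ / (1 + s n * ‖u n ω‖)
  have hρ0 : ∀ n ω, 0 ≤ ρ n ω := fun n _ => by have := hs n; positivity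
  have hC : OP P (fun n ω => N * (ρ n ω + s n * ‖ψ n ω‖ + s n * ‖l n ω‖)) (fun _ => 1) :=
    OP.const_mul (OP_of_le_add (OP_of_le_add (OP_of_oP hlin) hψ fun _ _ => le_rfl) hl
      fun _ _ => le_rfl) (norm_nonneg _)
  have hNρ : oP P (fun n ω => N * ρ n ω) (fun _ => 1) :=
    oP_of_le_mul hlin (OP_const N) hρ0 fun _ _ => (mul_comm _ _).le
  refine OP_of_le_add_mul_self hC hNρ (fun n _ => by have := hs n; positivity) fun n ω => ?_
  have hden : 0 < 1 + s n * ‖u n ω‖ := by have := hs n; positivity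
  have hid : s n • u n ω =
      A.symm (s n • (ψ n ω + A (u n ω) - l n ω) - s n • ψ n ω + s n • l n ω) := by
    apply A.injective
    simp only [map_sub, map_add, map_smul, ContinuousLinearEquiv.apply_symm_apply]
    module
  have hbound : s n * ‖u n ω‖ ≤ N * (s n * ‖ψ n ω + A (u n ω) - l n ω‖ + s n * ‖ψ n ω‖ +
      s n * ‖l n ω‖) := by
    rw [← norm_smul_of_nonneg (hs n), hid]
    refine (A.symm : F →L[ℝ] F).le_opNorm _ |>.trans (mul_le_mul_of_nonneg_left ?_ (norm_nonneg _))
    rw [← norm_smul_of_nonneg (hs n), ← norm_smul_of_nonneg (hs n), ← norm_smul_of_nonneg (hs n)]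
    exact (norm_add_le _ _).trans (add_le_add_left (norm_sub_le _ _) _)
  rw [← div_mul_cancel₀ (s n * ‖ψ n ω + A (u n ω) - l n ω‖) hden.ne'] at hbound
  nlinarith

theorem oP_smul_sub_symm_of_linearization (A : F ≃L[ℝ] F) (hs : ∀ n, 0 ≤ s n)
    (hroot : oP P (fun n ω => s n * ‖ψn n ω‖) (fun _ => 1))
    (hse : oP P (fun n ω => ‖s n • (ψn n ω - ψ n ω) - s n • ψn₀ n ω‖ /
      (1 + s n * ‖ψn n ω‖ + s n * ‖ψ n ω‖)) (fun _ => 1))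
    (htight : OP P (fun n ω => s n * ‖ψn₀ n ω‖) (fun _ => 1))
    (hl : OP P (fun n ω => s n * ‖l n ω‖) (fun _ => 1))
    (hlin : oP P (fun n ω => s n * ‖ψ n ω + A (u n ω) - l n ω‖ / (1 + s n * ‖u n ω‖))
      (fun _ => 1)) :
    oP P (fun n ω => ‖s n • u n ω - A.symm (s n • (ψn₀ n ω + l n ω))‖) (fun _ => 1) := by
  have hψ := OP_mul_norm_of_equicontinuous hs hroot hse htight
  have hu := OP_mul_norm_of_linearization A hs hψ hl hlin
  have hlin' : oP P (fun n ω => s n * ‖ψ n ω + A (u n ω) - l n ω‖) (fun _ => 1) :=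
    oP_of_le_mul hlin (OP_of_le_add (OP_const 1) hu fun _ _ => le_rfl)
      (fun n _ => by have := hs n; positivity) fun n ω => by
        rw [div_mul_cancel₀ _ (by have := hs n; positivity)]
  have hse' : oP P (fun n ω => ‖s n • (ψn n ω - ψ n ω) - s n • ψn₀ n ω‖) (fun _ => 1) :=
    oP_of_le_mul hse (OP_of_le_add (OP_of_le_add (OP_const 1) (OP_of_oP hroot)
      fun _ _ => le_rfl) hψ fun _ _ => le_rfl) (fun n _ => by have := hs n; positivity)
      fun n ω => by rw [div_mul_cancel₀ _ (by have := hs n; positivity)]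
  refine oP_of_le_mul (oP_of_le_add (oP_of_le_add hlin' hroot fun _ _ => le_rfl) hse'
    fun _ _ => le_rfl) (OP_const ‖(A.symm : F →L[ℝ] F)‖) (fun n _ => by have := hs n; positivity)
    fun n ω => ?_
  have hid : s n • u n ω - A.symm (s n • (ψn₀ n ω + l n ω)) = A.symm (s n • (ψ n ω +
      A (u n ω) - l n ω) - s n • ψn n ω + (s n • (ψn n ω - ψ n ω) - s n • ψn₀ n ω)) := by
    apply A.injective
    simp only [map_sub, map_add, map_smul, ContinuousLinearEquiv.apply_symm_apply]
    module
  rw [hid, mul_comm, ← norm_smul_of_nonneg (hs n), ← norm_smul_of_nonneg (hs n)]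
  refine (A.symm : F →L[ℝ] F).le_opNorm _ |>.trans (mul_le_mul_of_nonneg_left ?_ (norm_nonneg _))
  exact (norm_add_le _ _).trans (add_le_add_left (norm_sub_le _ _) _)

end Linearization


theorem asymptotic_representation_of_bundled_Z_estimator_general
    {d : ℕ} {E : Type*} [NormedAddCommGroup E] [NormedSpace ℝ E]
    {Ω : Type*} [MeasurableSpace Ω] (P : Measure Ω)
    (Θ : Set (Euc d))
    (θ0 : Euc d)
    (Ψn : ℕ → Ω → Euc d → E → Euc d)
    (Ψ : Euc d → E → Euc d)
    (η0 : Euc d → E)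
    (hzero : Ψ θ0 (η0 θ0) = 0)
    (θhat : ℕ → Ω → Euc d) (hθhatΘ : ∀ n ω, θhat n ω ∈ Θ)
    (ηhat : ℕ → Ω → Euc d → E)
    -- Ψ_n(θ̂_n, η̂_n(θ̂_n)) = o_p(n^{-1/2})
    (hroot : oP P (fun n ω => Real.sqrt n * ‖Ψn n ω (θhat n ω) (ηhat n ω (θhat n ω))‖)
      (fun _ => 1))
    -- (i) stochastic equicontinuity
    (hse : oP P (fun n ω =>
        ‖(Real.sqrt n) • (Ψn n ω (θhat n ω) (ηhat n ω (θhat n ω)) -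
              Ψ (θhat n ω) (ηhat n ω (θhat n ω))) -
          (Real.sqrt n) • (Ψn n ω θ0 (η0 θ0) - Ψ θ0 (η0 θ0))‖ /
          (1 + Real.sqrt n * ‖Ψn n ω (θhat n ω) (ηhat n ω (θhat n ω))‖ +
            Real.sqrt n * ‖Ψ (θhat n ω) (ηhat n ω (θhat n ω))‖)) (fun _ => 1))
    -- (ii) √n Ψ_n(θ0, η0(θ0)) = O_p(1)
    (htight : OP P (fun n ω => Real.sqrt n * ‖Ψn n ω θ0 (η0 θ0)‖) (fun _ => 1))
    (Θ0 : Set (Euc d)) (hΘ0nbhd : Θ0 ∈ nhdsWithin θ0 Θ)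
    (H0 : Set (Euc d → E)) (hηhatH0 : ∀ n ω, ηhat n ω ∈ H0)
    (Dη : (Euc d → E) → Euc d → (Euc d →L[ℝ] E))
    -- consistency of θ̂_n
    (hcons : oP P (fun n ω => ‖θhat n ω - θ0‖) (fun _ => 1))
    -- ‖η̂_n − η0‖ = O_p(n^{-β}), 0 < β ≤ 1/2
    (β : ℝ) (hβpos : 0 < β)
    (hηrate : OP P (fun n ω => ⨆ θ : Θ, ‖ηhat n ω θ - η0 θ‖) (fun n => (n : ℝ) ^ (-β)))
    -- (iii) smoothness: derivatives Ψ̇₁, Ψ̇₂ and nonsingular A = −Ψ̇₁ − Ψ̇₂ ∘ η̇₀(θ0)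
    (Ψdot1 : Euc d →L[ℝ] Euc d) (Ψdot2 : E →L[ℝ] Euc d)
    (A : Euc d ≃L[ℝ] Euc d)
    (hA : ∀ v : Euc d, A v = -(Ψdot1 v) - Ψdot2 (Dη η0 θ0 v))
    (hsmooth :
      (β = 1 / 2 ∧ ∀ ε : ℝ, 0 < ε → ∃ δ : ℝ, 0 < δ ∧ ∀ θ ∈ Θ0, ∀ η ∈ H0,
          ‖θ - θ0‖ < δ → (⨆ θ' : Θ, ‖η θ' - η0 θ'‖) < δ →
          ‖Ψ θ (η θ) - Ψ θ0 (η0 θ0) -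
              (Ψdot1 (θ - θ0) + Ψdot2 (Dη η0 θ0 (θ - θ0)) + Ψdot2 (η θ0 - η0 θ0))‖ ≤
            ε * ‖θ - θ0‖ + ε * (⨆ θ' : Θ, ‖η θ' - η0 θ'‖)) ∨
      (β < 1 / 2 ∧ ∃ α : ℝ, 1 < α ∧ 1 / 2 < α * β ∧ ∃ Cs : ℝ, ∀ ε : ℝ, 0 < ε →
          ∃ δ : ℝ, 0 < δ ∧ ∀ θ ∈ Θ0, ∀ η ∈ H0,
          ‖θ - θ0‖ < δ → (⨆ θ' : Θ, ‖η θ' - η0 θ'‖) < δ →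
          ‖Ψ θ (η θ) - Ψ θ0 (η0 θ0) -
              (Ψdot1 (θ - θ0) + Ψdot2 (Dη η0 θ0 (θ - θ0)) + Ψdot2 (η θ0 - η0 θ0))‖ ≤
            ε * ‖θ - θ0‖ + Cs * (⨆ θ' : Θ, ‖η θ' - η0 θ'‖) ^ α))
    -- (iv)
    (hiv : OP P (fun n ω => Real.sqrt n * ‖Ψdot2 (ηhat n ω θ0 - η0 θ0)‖) (fun _ => 1))
 :
    oP P (fun n ω =>
      ‖(Real.sqrt n) • (θhat n ω - θ0) -
        A.symm ((Real.sqrt n) • ((Ψn n ω θ0 (η0 θ0) - Ψ θ0 (η0 θ0)) +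
          Ψdot2 (ηhat n ω θ0 - η0 θ0)))‖) (fun _ => 1) := by
  have hX0 : ∀ n ω, 0 ≤ ‖θhat n ω - θ0‖ := fun _ _ => norm_nonneg _
  have hS0 : ∀ n ω, 0 ≤ ⨆ θ : Θ, ‖ηhat n ω θ - η0 θ‖ :=
    fun _ _ => Real.iSup_nonneg fun _ => norm_nonneg _
  have hrem : ∀ n ω, Ψ (θhat n ω) (ηhat n ω (θhat n ω)) + A (θhat n ω - θ0) -
      Ψdot2 (ηhat n ω θ0 - η0 θ0) = Ψ (θhat n ω) (ηhat n ω (θhat n ω)) - Ψ θ0 (η0 θ0) -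
        (Ψdot1 (θhat n ω - θ0) + Ψdot2 (Dη η0 θ0 (θhat n ω - θ0)) +
          Ψdot2 (ηhat n ω θ0 - η0 θ0)) := fun n ω => by
    rw [hzero, hA]; abel
  have key := oP_smul_sub_symm_of_linearization A (fun n => Real.sqrt_nonneg n) hroot
    (by simpa only [hzero, sub_zero] using hse) htight hiv (u := fun n ω => θhat n ω - θ0) ?_
  · simpa only [hzero, sub_zero] using key
  · simp only [hrem]
    rcases hsmooth with ⟨rfl, h⟩ | ⟨-, α, hα, hαβ, Cs, h⟩
    · exact oP_sqrt_mul_div_of_le_mul_add_mul hcons hX0 hηrate hS0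
        (forall_exists_le_comp_of_mem_nhdsWithin (g := fun ε x => ε * x) hΘ0nbhd h hθhatΘ
          hηhatH0)
    · exact oP_sqrt_mul_div_of_le_mul_add_rpow hβpos (by linarith) hαβ hcons hX0 hηrate hS0
        (forall_exists_le_comp_of_mem_nhdsWithin (g := fun _ x => Cs * x ^ α) hΘ0nbhd h hθhatΘ
          hηhatH0)

/-- Lemma 2.2: asymptotic representation of the bundled Z-estimator. -/
theorem asymptotic_representation_of_bundled_Z_estimator
    {d : ℕ} (hd : 1 ≤ d) {E : Type*} [NormedAddCommGroup E] [NormedSpace ℝ E]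
    {Ω : Type*} [MeasurableSpace Ω] (P : Measure Ω) [IsProbabilityMeasure P]
    (Θ : Set (Euc d)) (hΘ : IsCompact Θ)
    (θ0 : Euc d) (hθ0 : θ0 ∈ Θ)
    (Ψn : ℕ → Ω → Euc d → E → Euc d)
    (Ψ : Euc d → E → Euc d)
    (η0 : Euc d → E)
    (hzero : Ψ θ0 (η0 θ0) = 0)
    (θhat : ℕ → Ω → Euc d) (hθhatΘ : ∀ n ω, θhat n ω ∈ Θ)
    (ηhat : ℕ → Ω → Euc d → E)
    -- Ψ_n(θ̂_n, η̂_n(θ̂_n)) = o_p(n^{-1/2})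
    (hroot : oP P (fun n ω => Real.sqrt n * ‖Ψn n ω (θhat n ω) (ηhat n ω (θhat n ω))‖)
      (fun _ => 1))
    -- (i) stochastic equicontinuity
    (hse : oP P (fun n ω =>
        ‖(Real.sqrt n) • (Ψn n ω (θhat n ω) (ηhat n ω (θhat n ω)) -
              Ψ (θhat n ω) (ηhat n ω (θhat n ω))) -
          (Real.sqrt n) • (Ψn n ω θ0 (η0 θ0) - Ψ θ0 (η0 θ0))‖ /
          (1 + Real.sqrt n * ‖Ψn n ω (θhat n ω) (ηhat n ω (θhat n ω))‖ +
            Real.sqrt n * ‖Ψ (θhat n ω) (ηhat n ω (θhat n ω))‖)) (fun _ => 1))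
    -- (ii) √n Ψ_n(θ0, η0(θ0)) = O_p(1)
    (htight : OP P (fun n ω => Real.sqrt n * ‖Ψn n ω θ0 (η0 θ0)‖) (fun _ => 1))
    (Θ0 : Set (Euc d)) (hΘ0sub : Θ0 ⊆ Θ) (hΘ0nbhd : Θ0 ∈ nhdsWithin θ0 Θ)
    (H0 : Set (Euc d → E)) (hη0H0 : η0 ∈ H0) (hηhatH0 : ∀ n ω, ηhat n ω ∈ H0)
    -- members of H0 are continuously differentiable in θ on Θ0 with uniformly bounded derivatives
    (Dη : (Euc d → E) → Euc d → (Euc d →L[ℝ] E))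
    (hDη : ∀ η ∈ H0, ∀ θ ∈ Θ0, HasFDerivWithinAt η (Dη η θ) Θ0 θ)
    (hDηcont : ∀ η ∈ H0, ContinuousOn (Dη η) Θ0)
    (hDηbdd : ∃ K : ℝ, ∀ η ∈ H0, ∀ θ ∈ Θ0, ‖Dη η θ‖ ≤ K)
    -- θ0 the unique zero of θ ↦ Ψ(θ, η0(θ)) on Θ
    (huniq : ∀ θ ∈ Θ, Ψ θ (η0 θ) = 0 → θ = θ0)
    -- consistency of θ̂_n
    (hcons : oP P (fun n ω => ‖θhat n ω - θ0‖) (fun _ => 1))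
    -- ‖η̂_n − η0‖ = O_p(n^{-β}), 0 < β ≤ 1/2
    (β : ℝ) (hβpos : 0 < β) (hβle : β ≤ 1 / 2)
    (hηrate : OP P (fun n ω => ⨆ θ : Θ, ‖ηhat n ω θ - η0 θ‖) (fun n => (n : ℝ) ^ (-β)))
    -- (iii) smoothness: derivatives Ψ̇₁, Ψ̇₂ and nonsingular A = −Ψ̇₁ − Ψ̇₂ ∘ η̇₀(θ0)
    (Ψdot1 : Euc d →L[ℝ] Euc d) (Ψdot2 : E →L[ℝ] Euc d)
    (A : Euc d ≃L[ℝ] Euc d)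
    (hA : ∀ v : Euc d, A v = -(Ψdot1 v) - Ψdot2 (Dη η0 θ0 v))
    (hsmooth :
      (β = 1 / 2 ∧ ∀ ε : ℝ, 0 < ε → ∃ δ : ℝ, 0 < δ ∧ ∀ θ ∈ Θ0, ∀ η ∈ H0,
          ‖θ - θ0‖ < δ → (⨆ θ' : Θ, ‖η θ' - η0 θ'‖) < δ →
          ‖Ψ θ (η θ) - Ψ θ0 (η0 θ0) -
              (Ψdot1 (θ - θ0) + Ψdot2 (Dη η0 θ0 (θ - θ0)) + Ψdot2 (η θ0 - η0 θ0))‖ ≤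
            ε * ‖θ - θ0‖ + ε * (⨆ θ' : Θ, ‖η θ' - η0 θ'‖)) ∨
      (β < 1 / 2 ∧ ∃ α : ℝ, 1 < α ∧ 1 / 2 < α * β ∧ ∃ Cs : ℝ, ∀ ε : ℝ, 0 < ε →
          ∃ δ : ℝ, 0 < δ ∧ ∀ θ ∈ Θ0, ∀ η ∈ H0,
          ‖θ - θ0‖ < δ → (⨆ θ' : Θ, ‖η θ' - η0 θ'‖) < δ →
          ‖Ψ θ (η θ) - Ψ θ0 (η0 θ0) -
              (Ψdot1 (θ - θ0) + Ψdot2 (Dη η0 θ0 (θ - θ0)) + Ψdot2 (η θ0 - η0 θ0))‖ ≤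
            ε * ‖θ - θ0‖ + Cs * (⨆ θ' : Θ, ‖η θ' - η0 θ'‖) ^ α))
    -- (iv)
    (hiv : OP P (fun n ω => Real.sqrt n * ‖Ψdot2 (ηhat n ω θ0 - η0 θ0)‖) (fun _ => 1))
 :
    oP P (fun n ω =>
      ‖(Real.sqrt n) • (θhat n ω - θ0) -
        A.symm ((Real.sqrt n) • ((Ψn n ω θ0 (η0 θ0) - Ψ θ0 (η0 θ0)) +
          Ψdot2 (ηhat n ω θ0 - η0 θ0)))‖) (fun _ => 1) :=
  asymptotic_representation_of_bundled_Z_estimator_general P Θ θ0 Ψn Ψ η0 hzero θhat hθhatΘ ηhat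
    hroot hse htight Θ0 hΘ0nbhd H0 hηhatH0 Dη hcons β hβpos hηrate Ψdot1 Ψdot2 A hA hsmooth hiv
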